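/- arXiv:2107.01597 — 3 statements merged into one kernel-verified Lean document; each statement's English description precedes it below -/
import Mathlib

section
/- Let (X,f) be a functional module homomorphism between right functional A-modules E and F (i.e. X : E → F is a right A-module map, f : Θ_A(E) → Θ_A(F) is a left A-module map, and f(φ)(X(ξ)) = φ(ξ) for all φ, ξ) with X surjective. Then there is a ring homomorphism σ : K_A(E) → K_A(F) with σ(θ_{ξ,φ}) = θ_{X(ξ),f(φ)}, and f is automatically injective. -/
/-! Since `X` is surjective, an additive endomorphism `T` of `E` is covered by at most one
endomorphism `S` of `F` with `S ∘ X = X ∘ T`; let `σ T` be that `S` when it exists. Such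
intertwiners add and compose, so `σ` is additive and multiplicative wherever they exist. By
`f(φ) ∘ X = φ` and the `A`-linearity of `X`, `θ_{X η, f φ}` intertwines `θ_{η, φ}`, hence
every compact operator on `E` has an intertwiner that is compact on `F`. Injectivity of `f`
is the same identity: `φ = f(φ) ∘ X`. -/

section Descend

variable {M N : Type*} [AddCommGroup M] [AddCommGroup N]

/-- The endomorphism of `N` covering `T` along `X`, or `0` if there is none. -/
noncomputable def descend (X : M →+ N) (T : M →+ M) : N →+ N :=
  open Classical in
  if h : ∃ S : N →+ N, S.comp X = X.comp T then h.choose else 0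

theorem descend_eq {X : M →+ N} (hX : Function.Surjective X) {T : M →+ M} {S : N →+ N}
    (h : S.comp X = X.comp T) : descend X T = S := by
  have hex : ∃ S : N →+ N, S.comp X = X.comp T := ⟨S, h⟩
  rw [descend, dif_pos hex]
  exact (AddMonoidHom.cancel_right hX).1 (hex.choose_spec.trans h.symm)

def descendable (X : M →+ N) (K : AddSubgroup (N →+ N)) : AddSubgroup (M →+ M) where
  carrier := {T | ∃ S ∈ K, S.comp X = X.comp T}
  zero_mem' := ⟨0, K.zero_mem, by ext; simp⟩
  add_mem' := by
    rintro T₁ T₂ ⟨S₁, hS₁, h₁⟩ ⟨S₂, hS₂, h₂⟩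
    exact ⟨S₁ + S₂, K.add_mem hS₁ hS₂, by rw [AddMonoidHom.add_comp, h₁, h₂, AddMonoidHom.comp_add]⟩
  neg_mem' := by
    rintro T ⟨S, hS, h⟩
    exact ⟨-S, K.neg_mem hS, by rw [AddMonoidHom.neg_comp, h, AddMonoidHom.comp_neg]⟩

variable {X : M →+ N} {K : AddSubgroup (N →+ N)} {T T' : M →+ M}

theorem descend_mem (hX : Function.Surjective X) (hT : T ∈ descendable X K) :
    descend X T ∈ K := by
  obtain ⟨S, hS, h⟩ := hT
  rwa [descend_eq hX h]

theorem descend_add (hX : Function.Surjective X) (hT : T ∈ descendable X K)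
    (hT' : T' ∈ descendable X K) : descend X (T + T') = descend X T + descend X T' := by
  obtain ⟨S, -, h⟩ := hT
  obtain ⟨S', -, h'⟩ := hT'
  rw [descend_eq hX h, descend_eq hX h']
  exact descend_eq hX (by rw [AddMonoidHom.add_comp, h, h', AddMonoidHom.comp_add])

theorem descend_comp (hX : Function.Surjective X) (hT : T ∈ descendable X K)
    (hT' : T' ∈ descendable X K) : descend X (T.comp T') = (descend X T).comp (descend X T') := by
  obtain ⟨S, -, h⟩ := hT
  obtain ⟨S', -, h'⟩ := hT'
  rw [descend_eq hX h, descend_eq hX h']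
  refine descend_eq hX ?_
  rw [AddMonoidHom.comp_assoc, h', ← AddMonoidHom.comp_assoc, h, AddMonoidHom.comp_assoc]

end Descend

section Elementary

variable {A M N : Type*} [AddZeroClass A] [AddCommGroup M] [AddCommGroup N]

/-- The elementary operator `θ_{η,ψ} : ζ ↦ η · ψ(ζ)`. -/
def elementaryOp (sm : N → A → N) (hsm : ∀ (ζ : N) (a b : A), sm ζ (a + b) = sm ζ a + sm ζ b)
    (η : N) (ψ : N →+ A) : N →+ N :=
  AddMonoidHom.mk' (fun ζ => sm η (ψ ζ)) fun ζ ζ' => by rw [map_add, hsm]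

@[simp]
theorem elementaryOp_apply (sm : N → A → N)
    (hsm : ∀ (ζ : N) (a b : A), sm ζ (a + b) = sm ζ a + sm ζ b) (η : N) (ψ : N →+ A) (ζ : N) :
    elementaryOp sm hsm η ψ ζ = sm η (ψ ζ) :=
  rfl

theorem elementaryOp_comp_eq {smM : M → A → M} {smN : N → A → N}
    (hsm : ∀ (ζ : N) (a b : A), smN ζ (a + b) = smN ζ a + smN ζ b) {X : M →+ N}
    (hX : ∀ (ξ : M) (a : A), X (smM ξ a) = smN (X ξ) a) {η : M} {φ : M →+ A} {ψ : N →+ A}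
    (hψ : ψ.comp X = φ) {T : M →+ M} (hT : ∀ ξ, T ξ = smM η (φ ξ)) :
    (elementaryOp smN hsm (X η) ψ).comp X = X.comp T := by
  ext ξ
  simp [hT, hX, ← hψ]

end Elementary

theorem stmt9_general {A : Type*} [NonUnitalRing A]
    {E : Type*} [AddCommGroup E] {F : Type*} [AddCommGroup F]
    -- right `A`-module structures
    (smE : E → A → E) (smF : F → A → F)
    (smF_add_right : ∀ (ξ : F) (a b : A), smF ξ (a + b) = smF ξ a + smF ξ b)
    -- functional spaces
    (ΘE : Set (E →+ A)) (ΘF : Set (F →+ A))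
    -- the functional module homomorphism `(X, fmap)`
    (X : E →+ F)
    (hX_lin : ∀ (ξ : E) (a : A), X (smE ξ a) = smF (X ξ) a)
    (hX_surj : Function.Surjective X)
    (fmap : (E →+ A) → (F →+ A))
    (hf_mem : ∀ φ ∈ ΘE, fmap φ ∈ ΘF)
    (hcompat : ∀ φ ∈ ΘE, ∀ ξ : E, (fmap φ) (X ξ) = φ ξ)
    -- the compact operators
    (KE : AddSubgroup (E →+ E))
    (hKE : KE = AddSubgroup.closure
      {T : E →+ E | ∃ η : E, ∃ φ ∈ ΘE, ∀ ξ : E, T ξ = smE η (φ ξ)})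
    (KF : AddSubgroup (F →+ F))
    (hKF : KF = AddSubgroup.closure
      {T : F →+ F | ∃ η : F, ∃ φ ∈ ΘF, ∀ ξ : F, T ξ = smF η (φ ξ)}) :
    (∃ σ : (E →+ E) → (F →+ F),
        (∀ T ∈ KE, σ T ∈ KF) ∧
        (∀ T ∈ KE, ∀ S ∈ KE, σ (T + S) = σ T + σ S) ∧
        (∀ T ∈ KE, ∀ S ∈ KE, σ (T.comp S) = (σ T).comp (σ S)) ∧
        (∀ (η : E), ∀ φ ∈ ΘE, ∀ T : E →+ E,
          (∀ ξ : E, T ξ = smE η (φ ξ)) → ∀ ξ' : F, σ T ξ' = smF (X η) ((fmap φ) ξ'))) ∧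
      (∀ φ ∈ ΘE, ∀ ψ ∈ ΘE, fmap φ = fmap ψ → φ = ψ) := by
  have hfmap_comp : ∀ φ ∈ ΘE, (fmap φ).comp X = φ := fun φ hφ => AddMonoidHom.ext (hcompat φ hφ)
  have hKE_le : KE ≤ descendable X KF := by
    rw [hKE, AddSubgroup.closure_le]
    rintro T ⟨η, φ, hφ, hT⟩
    refine ⟨elementaryOp smF smF_add_right (X η) (fmap φ), ?_,
      elementaryOp_comp_eq smF_add_right hX_lin (hfmap_comp φ hφ) hT⟩
    rw [hKF]
    exact AddSubgroup.subset_closure ⟨X η, fmap φ, hf_mem φ hφ, fun _ => rfl⟩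
  refine ⟨⟨descend X, fun T hT => descend_mem hX_surj (hKE_le hT),
    fun T hT S hS => descend_add hX_surj (hKE_le hT) (hKE_le hS),
    fun T hT S hS => descend_comp hX_surj (hKE_le hT) (hKE_le hS), ?_⟩, ?_⟩
  · intro η φ hφ T hT ζ
    rw [descend_eq hX_surj (elementaryOp_comp_eq smF_add_right hX_lin (hfmap_comp φ hφ) hT)]
    rfl
  · intro φ hφ ψ hψ h
    rw [← hfmap_comp φ hφ, ← hfmap_comp ψ hψ, h]

/-- Let `(X, f)` be a functional module homomorphism between right functional `A`-modules
`E` and `F` (so `X : E → F` is a right `A`-module map, `f : Θ_A(E) → Θ_A(F)` is a left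
`A`-module map, and `f(φ)(X(ξ)) = φ(ξ)` for all `φ ∈ Θ_A(E)`, `ξ ∈ E`) with `X` surjective.
Then there is a ring homomorphism `σ : K_A(E) → K_A(F)` with
`σ(θ_{ξ,φ}) = θ_{X(ξ), f(φ)}`, and `f` is automatically injective. -/
theorem stmt9 {A : Type*} [NonUnitalRing A]
    {E : Type*} [AddCommGroup E] {F : Type*} [AddCommGroup F]
    -- right `A`-module structures
    (smE : E → A → E) (smF : F → A → F)
    (smE_add_left : ∀ (ξ η : E) (a : A), smE (ξ + η) a = smE ξ a + smE η a)
    (smE_add_right : ∀ (ξ : E) (a b : A), smE ξ (a + b) = smE ξ a + smE ξ b)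
    (smE_mul : ∀ (ξ : E) (a b : A), smE (smE ξ a) b = smE ξ (a * b))
    (smF_add_left : ∀ (ξ η : F) (a : A), smF (ξ + η) a = smF ξ a + smF η a)
    (smF_add_right : ∀ (ξ : F) (a b : A), smF ξ (a + b) = smF ξ a + smF ξ b)
    (smF_mul : ∀ (ξ : F) (a b : A), smF (smF ξ a) b = smF ξ (a * b))
    -- functional spaces
    (ΘE : Set (E →+ A)) (ΘF : Set (F →+ A))
    (hΘElin : ∀ φ ∈ ΘE, ∀ (ξ : E) (a : A), φ (smE ξ a) = φ ξ * a)
    (hΘFlin : ∀ φ ∈ ΘF, ∀ (ξ : F) (a : A), φ (smF ξ a) = φ ξ * a)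
    -- the functional module homomorphism `(X, fmap)`
    (X : E →+ F)
    (hX_lin : ∀ (ξ : E) (a : A), X (smE ξ a) = smF (X ξ) a)
    (hX_surj : Function.Surjective X)
    (fmap : (E →+ A) → (F →+ A))
    (hf_mem : ∀ φ ∈ ΘE, fmap φ ∈ ΘF)
    (hf_add : ∀ φ ∈ ΘE, ∀ ψ ∈ ΘE, fmap (φ + ψ) = fmap φ + fmap ψ)
    (hf_smul : ∀ φ ∈ ΘE, ∀ a : A,
      fmap ((AddMonoidHom.mulLeft a).comp φ) = (AddMonoidHom.mulLeft a).comp (fmap φ))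
    (hcompat : ∀ φ ∈ ΘE, ∀ ξ : E, (fmap φ) (X ξ) = φ ξ)
    -- the compact operators
    (KE : AddSubgroup (E →+ E))
    (hKE : KE = AddSubgroup.closure
      {T : E →+ E | ∃ η : E, ∃ φ ∈ ΘE, ∀ ξ : E, T ξ = smE η (φ ξ)})
    (KF : AddSubgroup (F →+ F))
    (hKF : KF = AddSubgroup.closure
      {T : F →+ F | ∃ η : F, ∃ φ ∈ ΘF, ∀ ξ : F, T ξ = smF η (φ ξ)}) :
    (∃ σ : (E →+ E) → (F →+ F),
        (∀ T ∈ KE, σ T ∈ KF) ∧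
        (∀ T ∈ KE, ∀ S ∈ KE, σ (T + S) = σ T + σ S) ∧
        (∀ T ∈ KE, ∀ S ∈ KE, σ (T.comp S) = (σ T).comp (σ S)) ∧
        (∀ (η : E), ∀ φ ∈ ΘE, ∀ T : E →+ E,
          (∀ ξ : E, T ξ = smE η (φ ξ)) → ∀ ξ' : F, σ T ξ' = smF (X η) ((fmap φ) ξ'))) ∧
      (∀ φ ∈ ΘE, ∀ ψ ∈ ΘE, fmap φ = fmap ψ → φ = ψ) :=
  stmt9_general smE smF smF_add_right ΘE ΘF X hX_lin hX_surj fmap hf_mem hcompat KE hKE KF hKF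
end

section
/- Let A be a quadratik ring with G-action, (M₂(A),θ) a G-ring such that the corner embeddings e₁₁ : (A,α) → (M₂(A),θ) and e₂₂ : (A,δ) → (M₂(A),θ) are G-equivariant. Then θ is 'entrywise': there exist maps β_g, γ_g on A such that θ_g applied to the matrix with entries (x,y;z,w) equals the matrix (α_g(x), β_g(y); γ_g(z), δ_g(w)); moreover the relations γ_g(ax) = δ_g(a)γ_g(x), γ_g(xb) = γ_g(x)α_g(b), β_g(ax) = α_g(a)β_g(x), β_g(xb) = β_g(x)δ_g(b), α_g(xy) = β_g(x)γ_g(y), δ_g(xy) = γ_g(x)β_g(y), and γ_{gh} = γ_g γ_h, β_{gh} = β_g β_h hold for all g,h ∈ G and a,b,x,y ∈ A. -/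
/-- A ring `A` is *quadratik* if every element of `A` is a finite sum of products `a * b`. -/
def IsQuadratik (A : Type*) [NonUnitalRing A] : Prop :=
  ∀ x : A, x ∈ AddSubgroup.closure {z : A | ∃ a b : A, z = a * b}

/-! Since `single i j (a * b) = single i i a * single i j b = single i j a * single j j b`, an
automorphism preserving the diagonal corners sends `single i j (a * b)` to a matrix living both in
row `i` and in column `j`, i.e. in the corner `(i, j)`; as `A` is additively generated by products,
every corner is preserved. The relations are then the images of
`single i k (x * y) = single i j x * single j k y` and of `θ (g * h) = θ g ∘ θ h`. -/

open Matrix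

section

variable {n A : Type*} [Fintype n] [DecidableEq n] [NonUnitalRing A]

omit [Fintype n] in
lemma Matrix.single_injective (i j : n) : Function.Injective (single i j : A → Matrix n n A) :=
  fun x y h => by simpa using congrFun (congrFun h i) j

lemma Matrix.eq_single_of_eq_single_mul_of_eq_mul_single {M N N' : Matrix n n A} {i j : n}
    {c d : A} (hrow : M = single i i c * N) (hcol : M = N' * single j j d) :
    M = single i j (M i j) := by
  ext k l
  by_cases hk : k = i
  · by_cases hl : l = j
    · subst hk hl; simp
    · rw [single_apply_of_col_ne _ _ (Ne.symm hl), hcol]; simp [hl]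
  · rw [single_apply_of_row_ne (Ne.symm hk), hrow]; simp [hk]

def PreservesSingle (f : Matrix n n A → Matrix n n A) (i j : n) : Prop :=
  ∀ x, ∃ y, f (single i j x) = single i j y

def entryMap (f : Matrix n n A → Matrix n n A) (i j : n) (x : A) : A :=
  f (single i j x) i j

omit [Fintype n] in
lemma PreservesSingle.map_single {f : Matrix n n A → Matrix n n A} {i j : n}
    (hf : PreservesSingle f i j) (x : A) : f (single i j x) = single i j (entryMap f i j x) := by
  obtain ⟨y, hy⟩ := hf x
  simp [entryMap, hy]

omit [Fintype n] in
lemma PreservesSingle.entryMap_comp {f f' : Matrix n n A → Matrix n n A} {i j : n}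
    (hf' : PreservesSingle f' i j) (x : A) :
    entryMap (f ∘ f') i j x = entryMap f i j (entryMap f' i j x) := by
  change f (f' (single i j x)) i j = _
  rw [hf'.map_single]
  rfl

variable {F : Type*} [FunLike F (Matrix n n A) (Matrix n n A)]
  [NonUnitalRingHomClass F (Matrix n n A) (Matrix n n A)]

lemma IsQuadratik.preservesSingle (hA : IsQuadratik A) {f : F} {i j : n}
    (hi : PreservesSingle f i i) (hj : PreservesSingle f j j) : PreservesSingle f i j := by
  intro x
  induction hA x using AddSubgroup.closure_induction with
  | mem _ hz =>
    obtain ⟨a, b, rfl⟩ := hz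
    refine ⟨_, eq_single_of_eq_single_mul_of_eq_mul_single (N := f (single i j b))
      (N' := f (single i j a)) (c := entryMap f i i a) (d := entryMap f j j b) ?_ ?_⟩
    · rw [← single_mul_single_same a i i j, map_mul, hi.map_single]
    · rw [← single_mul_single_same a i j j, map_mul, hj.map_single]
  | zero => exact ⟨0, by simp⟩
  | add _ _ _ _ hx hy =>
    obtain ⟨x', hx'⟩ := hx
    obtain ⟨y', hy'⟩ := hy
    exact ⟨x' + y', by rw [single_add, map_add, hx', hy', single_add]⟩
  | neg _ _ hx =>
    obtain ⟨x', hx'⟩ := hx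
    exact ⟨-x', by rw [← single_neg, map_neg, hx', single_neg]⟩

lemma entryMap_mul {f : F} (hf : ∀ i j, PreservesSingle f i j) (i j k : n) (x y : A) :
    entryMap f i k (x * y) = entryMap f i j x * entryMap f j k y := by
  apply single_injective (A := A) i k
  rw [← (hf i k).map_single, ← single_mul_single_same x i j k, map_mul, (hf i j).map_single,
    (hf j k).map_single, single_mul_single_same]

lemma map_eq_of_entryMap {f : F} (hf : ∀ i j, PreservesSingle f i j) (M : Matrix n n A) :
    f M = of fun i j => entryMap f i j (M i j) := by
  conv_lhs => rw [matrix_eq_sum_single M]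
  simp only [map_sum, (hf _ _).map_single, sum_sum_single]

end

/-- Let `A` be a quadratik ring with `G`-actions `α, δ`, and let `θ` be a `G`-action on
`M₂(A)` such that the corner embeddings `e₁₁ : (A,α) → (M₂(A),θ)` and
`e₂₂ : (A,δ) → (M₂(A),θ)` are `G`-equivariant.  Then `θ` is entrywise:
there are `β_g, γ_g : A → A` with `θ_g (x y; z w) = (α_g x, β_g y; γ_g z, δ_g w)`, and the
relations `γ_g(ax) = δ_g(a)γ_g(x)`, `γ_g(xb) = γ_g(x)α_g(b)`, `β_g(ax) = α_g(a)β_g(x)`,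
`β_g(xb) = β_g(x)δ_g(b)`, `α_g(xy) = β_g(x)γ_g(y)`, `δ_g(xy) = γ_g(x)β_g(y)`,
`γ_{gh} = γ_g γ_h` and `β_{gh} = β_g β_h` hold. -/
theorem stmt15 {G : Type*} [Group G] {A : Type*} [NonUnitalRing A]
    (hA : IsQuadratik A)
    (α δ : G →* RingAut A)
    (θ : G →* RingAut (Matrix (Fin 2) (Fin 2) A))
    (h11 : ∀ (g : G) (a : A),
      θ g (Matrix.single 0 0 a) = Matrix.single 0 0 (α g a))
    (h22 : ∀ (g : G) (a : A),
      θ g (Matrix.single 1 1 a) = Matrix.single 1 1 (δ g a)) :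
    ∃ β γ : G → A → A,
      (∀ (g : G) (x y z w : A),
        θ g !![x, y; z, w] = !![α g x, β g y; γ g z, δ g w]) ∧
      (∀ (g : G) (a x : A), γ g (a * x) = δ g a * γ g x) ∧
      (∀ (g : G) (x b : A), γ g (x * b) = γ g x * α g b) ∧
      (∀ (g : G) (a x : A), β g (a * x) = α g a * β g x) ∧
      (∀ (g : G) (x b : A), β g (x * b) = β g x * δ g b) ∧
      (∀ (g : G) (x y : A), α g (x * y) = β g x * γ g y) ∧
      (∀ (g : G) (x y : A), δ g (x * y) = γ g x * β g y) ∧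
      (∀ (g h : G) (x : A), γ (g * h) x = γ g (γ h x)) ∧
      (∀ (g h : G) (x : A), β (g * h) x = β g (β h x)) := by
  have hθ (g : G) : ∀ i j, PreservesSingle (θ g) i j := by
    have hcorner₀ : PreservesSingle (θ g) 0 0 := fun a => ⟨_, h11 g a⟩
    have hcorner₁ : PreservesSingle (θ g) 1 1 := fun a => ⟨_, h22 g a⟩
    simp only [Fin.forall_fin_two]
    exact ⟨⟨hcorner₀, hA.preservesSingle hcorner₀ hcorner₁⟩, ⟨hA.preservesSingle hcorner₁ hcorner₀, hcorner₁⟩⟩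
  have hα (g : G) : ⇑(α g) = entryMap (θ g) 0 0 := funext fun a => by simp [entryMap, h11]
  have hδ (g : G) : ⇑(δ g) = entryMap (θ g) 1 1 := funext fun a => by simp [entryMap, h22]
  have hcomp (g h : G) : ⇑(θ (g * h)) = θ g ∘ θ h := by rw [map_mul]; rfl
  refine ⟨fun g => entryMap (θ g) 0 1, fun g => entryMap (θ g) 1 0, fun g x y z w => ?_, ?_⟩
  · rw [map_eq_of_entryMap (hθ g), hα, hδ]
    ext i j
    fin_cases i <;> fin_cases j <;> rfl
  simp only [hα, hδ, hcomp]
  exact ⟨fun g => entryMap_mul (hθ g) 1 1 0, fun g => entryMap_mul (hθ g) 1 0 0,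
    fun g => entryMap_mul (hθ g) 0 0 1, fun g => entryMap_mul (hθ g) 0 1 1,
    fun g => entryMap_mul (hθ g) 0 1 0, fun g => entryMap_mul (hθ g) 1 0 1,
    fun g h => (hθ h 1 0).entryMap_comp, fun g h => (hθ h 0 1).entryMap_comp⟩
end

section
/- Given an injective ring homomorphism i : B → M whose image is a two-sided ideal in M, and a ring homomorphism s : A → M, the set M □_s A := { (s(a)+i(b), a) ∈ M ⊕ A : a ∈ A, b ∈ B } is a subring of M ⊕ A, and there is a split exact sequence 0 → B →^j M□_sA →^f A → 0 with j(b) = (i(b),0), f(m,a) = a, and split (s□1)(a) = (s(a),a). Moreover, if A and B are quadratik, then M □_s A is quadratik. -/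
/-!
`M □_s A` is the sum of the images of the two ring maps `a ↦ (s a, a)` and `b ↦ (i b, 0)`.
It is closed under products because `im i` is an ideal of `M`, and if `A` and `B` are quadratik,
the images of sums of products under these maps are sums of products of elements of `M □_s A`.
-/

theorem IsQuadratik.map_mem_closure {R N : Type*} [NonUnitalRing R] [NonUnitalRing N]
    (hR : IsQuadratik R) (g : R →ₙ+* N) {T : Set N} (hT : ∀ a b : R, g a * g b ∈ T) (x : R) :
    g x ∈ AddSubgroup.closure T := by
  have hx := AddSubgroup.mem_map_of_mem (g : R →+ N) (hR x)
  rw [AddMonoidHom.map_closure] at hx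
  refine AddSubgroup.closure_mono ?_ hx
  rintro _ ⟨_, ⟨a, b, rfl⟩, rfl⟩
  simpa using hT a b

namespace NonUnitalRingHom

variable {A B M : Type*} [NonUnitalRing A] [NonUnitalRing B] [NonUnitalRing M]
  (i : B →ₙ+* M) (s : A →ₙ+* M)

/-- The ring `M □_s A = {(s a + i b, a)} ⊆ M × A`. -/
def boxSubring (hl : ∀ (m : M) (b : B), m * i b ∈ Set.range i)
    (hr : ∀ (m : M) (b : B), i b * m ∈ Set.range i) : NonUnitalSubring (M × A) where
  carrier := {p | ∃ (a : A) (b : B), p = (s a + i b, a)}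
  zero_mem' := ⟨0, 0, by simp [Prod.zero_eq_mk]⟩
  add_mem' := by
    rintro _ _ ⟨a, b, rfl⟩ ⟨a', b', rfl⟩
    exact ⟨a + a', b + b', by simp only [Prod.mk_add_mk, map_add]; abel_nf⟩
  neg_mem' := by
    rintro _ ⟨a, b, rfl⟩
    exact ⟨-a, -b, by simp only [Prod.neg_mk, map_neg, neg_add]⟩
  mul_mem' := by
    rintro _ _ ⟨a, b, rfl⟩ ⟨a', b', rfl⟩
    obtain ⟨c, hc⟩ := hl (s a) b'
    obtain ⟨c', hc'⟩ := hr (s a') b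
    refine ⟨a * a', c + c' + b * b', ?_⟩
    simp only [Prod.mk_mul_mk, map_add, map_mul, mul_add, add_mul, hc, hc']
    abel_nf

variable {i s} {hl : ∀ (m : M) (b : B), m * i b ∈ Set.range i}
  {hr : ∀ (m : M) (b : B), i b * m ∈ Set.range i}

theorem prod_id_mem_boxSubring (a : A) :
    s.prod (NonUnitalRingHom.id A) a ∈ boxSubring i s hl hr :=
  ⟨a, 0, by simp⟩

theorem prod_zero_mem_boxSubring (b : B) : i.prod (0 : B →ₙ+* A) b ∈ boxSubring i s hl hr :=
  ⟨0, b, by simp⟩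

theorem snd_eq_zero_iff_of_mem_boxSubring {p : M × A} (hp : p ∈ boxSubring i s hl hr) :
    p.2 = 0 ↔ ∃ b : B, p = (i b, 0) := by
  obtain ⟨a, b, rfl⟩ := hp
  constructor
  · rintro (rfl : a = 0)
    exact ⟨b, by simp⟩
  · rintro ⟨b', hb'⟩
    exact (Prod.ext_iff.mp hb').2

theorem mem_closure_mul_boxSubring (hA : IsQuadratik A) (hB : IsQuadratik B) {p : M × A}
    (hp : p ∈ boxSubring i s hl hr) :
    p ∈ AddSubgroup.closure
      {q | ∃ u ∈ boxSubring i s hl hr, ∃ v ∈ boxSubring i s hl hr, q = u * v} := by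
  obtain ⟨a, b, rfl⟩ := hp
  have hsplit : s.prod (NonUnitalRingHom.id A) a + i.prod (0 : B →ₙ+* A) b = (s a + i b, a) := by
    simp
  rw [← hsplit]
  refine add_mem (hA.map_mem_closure _ (fun x y => ?_) a)
    (hB.map_mem_closure _ (fun x y => ?_) b)
  · exact ⟨_, prod_id_mem_boxSubring x, _, prod_id_mem_boxSubring y, rfl⟩
  · exact ⟨_, prod_zero_mem_boxSubring x, _, prod_zero_mem_boxSubring y, rfl⟩

end NonUnitalRingHom

open NonUnitalRingHom in
/-- Given an injective ring homomorphism `i : B → M` whose image is a two-sided ideal in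
`M`, and a ring homomorphism `s : A → M`, the set
`M □_s A = { (s(a)+i(b), a) : a ∈ A, b ∈ B } ⊆ M ⊕ A` is a subring, and there is a split
exact sequence `0 → B → M□_sA → A → 0` with `j(b) = (i(b),0)`, `f(m,a) = a` and split
`(s□1)(a) = (s(a),a)`.  Moreover, if `A` and `B` are quadratik then so is `M □_s A`. -/
theorem stmt16 {A B M : Type*} [NonUnitalRing A] [NonUnitalRing B] [NonUnitalRing M]
    (i : B →ₙ+* M) (hi : Function.Injective i)
    (hideal_l : ∀ (m : M) (b : B), m * i b ∈ Set.range i)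
    (hideal_r : ∀ (m : M) (b : B), i b * m ∈ Set.range i)
    (s : A →ₙ+* M)
    (D : Set (M × A)) (hD : D = {p : M × A | ∃ (a : A) (b : B), p = (s a + i b, a)}) :
    -- `D = M □_s A` is a subring of `M ⊕ A`
    (∀ p ∈ D, ∀ q ∈ D, p + q ∈ D) ∧
    (∀ p ∈ D, -p ∈ D) ∧
    (∀ p ∈ D, ∀ q ∈ D, p * q ∈ D) ∧
    -- `j : B → M □_s A`, `j(b) = (i(b),0)`, is injective with image the kernel of
    -- `f : M □_s A → A`, `f(m,a) = a`
    Function.Injective (fun b : B => ((i b, 0) : M × A)) ∧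
    (∀ b : B, ((i b, (0 : A)) : M × A) ∈ D) ∧
    (∀ p ∈ D, (p.2 = 0 ↔ ∃ b : B, p = (i b, 0))) ∧
    -- `s □ 1` is a split of `f`
    (∀ a : A, ((s a, a) : M × A) ∈ D) ∧
    (∀ a : A, ((s a, a) : M × A).2 = a) ∧
    -- quadratik-ness
    (IsQuadratik A → IsQuadratik B →
      ∀ p ∈ D, p ∈ AddSubgroup.closure {q : M × A | ∃ u ∈ D, ∃ v ∈ D, q = u * v}) := by
  set R := boxSubring i s hideal_l hideal_r
  obtain rfl : D = R := hD
  exact ⟨fun _ hp _ hq => R.add_mem hp hq, fun _ hp => R.neg_mem hp,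
    fun _ hp _ hq => R.mul_mem hp hq, fun _ _ h => hi (Prod.ext_iff.mp h).1,
    prod_zero_mem_boxSubring, fun _ => snd_eq_zero_iff_of_mem_boxSubring,
    prod_id_mem_boxSubring, fun _ => rfl, fun hA hB _ => mem_closure_mul_boxSubring hA hB⟩
end
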